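/- arXiv:1906.06221 — 2 statements merged into one kernel-verified Lean document; each statement's English description precedes it below -/
import Mathlib

section
/- Let Ω ⊂ ℝ^d be a bounded open set with C¹ boundary, Z a C² vector field, v ∈ C²(Ω̄) and φ ∈ C_c^∞(Ω). Then pointwise on Ω the identity (DZ + DZ^⊤)∇v · ∇φ + φ ∇(div Z) · ∇v = div( div(φZ) ∇v − (∇v · ∇φ) Z ) + ∇(Z · ∇v) · ∇φ − div(φZ) Δv holds. -/
open Matrix
open scoped RealInnerProductSpace

/-- Divergence of a vector field on Euclidean space. -/
noncomputable def ediv {d : ℕ}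
    (F : EuclideanSpace ℝ (Fin d) → EuclideanSpace ℝ (Fin d))
    (x : EuclideanSpace ℝ (Fin d)) : ℝ :=
  ∑ i, fderiv ℝ F x (EuclideanSpace.single i 1) i

/-- Laplacian of a scalar function, as the divergence of its gradient. -/
noncomputable def elap {d : ℕ}
    (f : EuclideanSpace ℝ (Fin d) → ℝ) (x : EuclideanSpace ℝ (Fin d)) : ℝ :=
  ediv (gradient f) x

section Aux

variable {d : ℕ}

local notation "E" => EuclideanSpace ℝ (Fin d)

lemma sum_antisym (f : Fin d → Fin d → ℝ) (h : ∀ i j, f i j = - f j i) :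
    ∑ i, ∑ j, f i j = 0 := by
  have h2 : (∑ i, ∑ j, f i j) = - ∑ i, ∑ j, f i j := by
    conv_lhs => rw [Finset.sum_comm]
    rw [← Finset.sum_neg_distrib]
    refine Finset.sum_congr rfl fun j _ => ?_
    rw [← Finset.sum_neg_distrib]
    exact Finset.sum_congr rfl fun i _ => by rw [h i j]
  linarith

theorem key_alg (A B C : Fin d → ℝ) (Jm V Φ W : Fin d → Fin d → ℝ) (p : ℝ)
    (hV : ∀ i j, V i j = V j i) (hΦ : ∀ i j, Φ i j = Φ j i) :
    (∑ i, (∑ j, (Jm i j + Jm j i) * A j) * B i) + p * ∑ i, (∑ j, W i j) * A i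
    = (∑ i, ((∑ j, (B i * Jm j j + p * W i j + Jm j i * B j + C j * Φ i j)) * A i
          + (∑ j, (p * Jm j j + C j * B j)) * V i i
          - ((∑ j, (V i j * B j + A j * Φ i j)) * C i
             + (∑ j, A j * B j) * Jm i i)))
      + (∑ i, (∑ j, (Jm j i * A j + C j * V i j)) * B i)
      - (∑ j, (p * Jm j j + C j * B j)) * ∑ i, V i i := by
  rw [← sub_eq_zero]
  simp only [Finset.sum_mul, Finset.mul_sum, add_mul, sub_mul]
  simp only [← Finset.sum_sub_distrib, ← Finset.sum_add_distrib]
  apply sum_antisym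
  intro i j
  rw [hV j i, hΦ j i]
  ring

lemma grad_comp (f : E → ℝ) (x : E) (i : Fin d) :
    gradient f x i = fderiv ℝ f x (EuclideanSpace.single i 1) := by
  have h := InnerProductSpace.toDual_symm_apply (𝕜 := ℝ) (y := fderiv ℝ f x)
    (x := EuclideanSpace.single i 1)
  rw [gradient, ← h]
  simp only [PiLp.inner_apply, RCLike.inner_apply, conj_trivial, EuclideanSpace.single_apply]
  simp

lemma fderiv_component {F : E → E} {x : E} (hF : DifferentiableAt ℝ F x) (i : Fin d) (u : E) :
    fderiv ℝ (fun y => F y i) x u = (fderiv ℝ F x u) i := by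
  have : HasFDerivAt (fun y => F y i) ((EuclideanSpace.proj (𝕜 := ℝ) i).comp (fderiv ℝ F x)) x :=
    (EuclideanSpace.proj (𝕜 := ℝ) i).hasFDerivAt.comp x hF.hasFDerivAt
  rw [this.fderiv]; rfl

lemma real_inner_sum (u w : E) : (inner ℝ u w : ℝ) = ∑ i, u i * w i := by
  simp [PiLp.inner_apply]
  exact Finset.sum_congr rfl fun i _ => mul_comm _ _

lemma comp_proj {n : WithTop ℕ∞} {F : E → E} (hF : ContDiff ℝ n F) (j : Fin d) :
    ContDiff ℝ n (fun y => F y j) :=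
  (EuclideanSpace.proj (𝕜 := ℝ) j).contDiff.comp hF

lemma ediv_eq {F : E → E} {x : E} (hF : DifferentiableAt ℝ F x) :
    ediv F x = ∑ i, fderiv ℝ (fun y => F y i) x (EuclideanSpace.single i 1) := by
  unfold ediv
  exact Finset.sum_congr rfl fun i _ => (fderiv_component hF i _).symm

lemma grad_eq_sum (f : E → ℝ) :
    gradient f = fun y => ∑ i, fderiv ℝ f y (EuclideanSpace.single i 1)
      • (EuclideanSpace.single i 1 : E) := by
  funext y
  ext j
  rw [grad_comp]
  classical
  have hsum : ∀ (s : Finset (Fin d)),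
      ((∑ i ∈ s, fderiv ℝ f y (EuclideanSpace.single i 1) • (EuclideanSpace.single i 1 : E)) j)
      = ∑ i ∈ s, fderiv ℝ f y (EuclideanSpace.single i 1) * (EuclideanSpace.single i 1 : E) j := by
    intro s
    induction s using Finset.induction with
    | empty => simp
    | insert a s h ih =>
      rw [Finset.sum_insert h, Finset.sum_insert h, PiLp.add_apply, PiLp.smul_apply,
        smul_eq_mul, ih]
  rw [hsum Finset.univ]
  simp [EuclideanSpace.single_apply]

lemma grad_contDiff {n m : WithTop ℕ∞} {f : E → ℝ} (hf : ContDiff ℝ n f) (hmn : m + 1 ≤ n) :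
    ContDiff ℝ m (gradient f) := by
  rw [grad_eq_sum]
  exact ContDiff.sum fun i _ =>
    ((hf.fderiv_right hmn).clm_apply contDiff_const).smul contDiff_const

lemma second_sym {f : E → ℝ} {x : E} {n : WithTop ℕ∞} (hf : ContDiff ℝ n f) (hn : 2 ≤ n)
    (i j : Fin d) :
    fderiv ℝ (fun y => fderiv ℝ f y (EuclideanSpace.single j 1)) x (EuclideanSpace.single i 1)
    = fderiv ℝ (fun y => fderiv ℝ f y (EuclideanSpace.single i 1)) x
        (EuclideanSpace.single j 1) := by
  have hd : DifferentiableAt ℝ (fderiv ℝ f) x :=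
    ((hf.fderiv_right (m := 1) (by exact le_trans (by norm_num) hn)).differentiable one_ne_zero) x
  have h1 : ∀ u w : E, fderiv ℝ (fun y => fderiv ℝ f y u) x w = fderiv ℝ (fderiv ℝ f) x w u := by
    intro u w
    rw [fderiv_clm_apply hd (differentiableAt_const _)]
    simp
  rw [h1, h1]
  exact (hf.contDiffAt.isSymmSndFDerivAt (by simpa using hn)) _ _

lemma pd_sum_mul {f g : Fin d → E → ℝ} {x : E}
    (hf : ∀ j, DifferentiableAt ℝ (f j) x) (hg : ∀ j, DifferentiableAt ℝ (g j) x) (u : E) :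
    fderiv ℝ (fun y => ∑ j, f j y * g j y) x u
    = ∑ j, (f j x * fderiv ℝ (g j) x u + g j x * fderiv ℝ (f j) x u) := by
  rw [fderiv_fun_sum (A := fun j y => f j y * g j y) (fun j _ => (hf j).mul (hg j)), ContinuousLinearMap.sum_apply]
  exact Finset.sum_congr rfl fun j _ => by rw [fderiv_fun_mul (hf j) (hg j)]; simp

lemma pd_sum_mul2 {f g h k : Fin d → E → ℝ} {x : E}
    (hf : ∀ j, DifferentiableAt ℝ (f j) x) (hg : ∀ j, DifferentiableAt ℝ (g j) x)
    (hh : ∀ j, DifferentiableAt ℝ (h j) x) (hk : ∀ j, DifferentiableAt ℝ (k j) x) (u : E) :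
    fderiv ℝ (fun y => ∑ j, (f j y * g j y + h j y * k j y)) x u
    = ∑ j, (f j x * fderiv ℝ (g j) x u + g j x * fderiv ℝ (f j) x u
        + (h j x * fderiv ℝ (k j) x u + k j x * fderiv ℝ (h j) x u)) := by
  rw [fderiv_fun_sum (A := fun j y => f j y * g j y + h j y * k j y) (fun j _ => ((hf j).mul (hg j)).add ((hh j).mul (hk j))),
    ContinuousLinearMap.sum_apply]
  refine Finset.sum_congr rfl fun j _ => ?_
  rw [fderiv_fun_add (f := fun y => f j y * g j y) (g := fun y => h j y * k j y) ((hf j).mul (hg j)) ((hh j).mul (hk j)), fderiv_fun_mul (hf j) (hg j),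
    fderiv_fun_mul (hh j) (hk j)]
  simp

end Aux

/-- The algebraic-differential identity
`(DZ + DZ^⊤)∇v · ∇φ + φ ∇(div Z) · ∇v
  = div( div(φZ) ∇v − (∇v · ∇φ) Z ) + ∇(Z · ∇v) · ∇φ − div(φZ) Δv`
pointwise on `Ω`. -/
theorem shape_derivative_identity
    (d : ℕ) (Ω : Set (EuclideanSpace ℝ (Fin d)))
    (hΩ : IsOpen Ω) (hΩb : Bornology.IsBounded Ω)
    (Z : EuclideanSpace ℝ (Fin d) → EuclideanSpace ℝ (Fin d))
    (J : EuclideanSpace ℝ (Fin d) → Matrix (Fin d) (Fin d) ℝ)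
    (v φ : EuclideanSpace ℝ (Fin d) → ℝ)
    (hZ : ContDiff ℝ 2 Z) (hv : ContDiff ℝ 2 v)
    (hφ : ContDiff ℝ (⊤ : ℕ∞) φ) (hφc : HasCompactSupport φ) (hφΩ : tsupport φ ⊆ Ω)
    (hJ : ∀ x, HasFDerivAt Z
      ((Matrix.toEuclideanLin (J x)).toContinuousLinearMap) x)
    (x : EuclideanSpace ℝ (Fin d)) (hx : x ∈ Ω) :
    ⟪Matrix.toEuclideanLin (J x + (J x)ᵀ) (gradient v x), gradient φ x⟫
        + φ x * ⟪gradient (fun y => (J y).trace) x, gradient v x⟫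
      = ediv (fun y => ediv (fun z => φ z • Z z) y • gradient v y
            - ⟪gradient v y, gradient φ y⟫ • Z y) x
        + ⟪gradient (fun y => ⟪Z y, gradient v y⟫) x, gradient φ x⟫
        - ediv (fun y => φ y • Z y) x * elap v x := by
  classical
  -- differentiability database
  have hvd : Differentiable ℝ v := hv.differentiable (by norm_num)
  have hφd : Differentiable ℝ φ := hφ.differentiable (by simp)
  have hZd : Differentiable ℝ Z := hZ.differentiable (by norm_num)
  have hfZ : ContDiff ℝ 1 (fderiv ℝ Z) := hZ.fderiv_right (by norm_num)
  have hGv : ContDiff ℝ 1 (gradient v) := grad_contDiff hv (by norm_num)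
  have hGφ : ContDiff ℝ 1 (gradient φ) := grad_contDiff hφ (by exact le_trans (by norm_num) (WithTop.coe_le_coe.mpr (le_top (a := (2:ℕ∞)))))
  have hgv : ∀ j, ContDiff ℝ 1 (fun y => gradient v y j) := fun j => comp_proj hGv j
  have hgφ : ∀ j, ContDiff ℝ 1 (fun y => gradient φ y j) := fun j => comp_proj hGφ j
  have hZc : ∀ j, ContDiff ℝ 1 (fun y => Z y j) := fun j => comp_proj (hZ.of_le (by norm_num)) j
  -- J entries as derivatives
  have hJpd : ∀ (y : EuclideanSpace ℝ (Fin d)) (k l : Fin d),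
      fderiv ℝ (fun z => Z z k) y (EuclideanSpace.single l 1) = J y k l := by
    intro y k l
    rw [fderiv_component (hZd y) k (EuclideanSpace.single l 1), (hJ y).fderiv]
    simp [Matrix.toEuclideanLin_apply, Matrix.mulVec, dotProduct,
      EuclideanSpace.single_apply]
  have hJc : ∀ k l, ContDiff ℝ 1 (fun y => J y k l) := by
    intro k l
    have heq : (fun y => J y k l) = fun y => (fderiv ℝ Z y) (EuclideanSpace.single l 1) k := by
      funext y
      rw [← hJpd y k l, fderiv_component (hZd y) k (EuclideanSpace.single l 1)]
    rw [heq]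
    exact comp_proj (hfZ.clm_apply contDiff_const) k
  -- atoms
  set A : Fin d → ℝ := fun i => gradient v x i with hA
  set B : Fin d → ℝ := fun i => gradient φ x i with hB
  set C : Fin d → ℝ := fun i => Z x i with hC
  set Jm : Fin d → Fin d → ℝ := fun i j => J x i j with hJm
  set V : Fin d → Fin d → ℝ :=
    fun i j => fderiv ℝ (fun y => gradient v y j) x (EuclideanSpace.single i 1) with hVdef
  set Φ : Fin d → Fin d → ℝ :=
    fun i j => fderiv ℝ (fun y => gradient φ y j) x (EuclideanSpace.single i 1) with hΦdef
  set W : Fin d → Fin d → ℝ :=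
    fun i j => fderiv ℝ (fun y => J y j j) x (EuclideanSpace.single i 1) with hWdef
  -- symmetry of second derivatives
  have hVsym : ∀ i j, V i j = V j i := by
    intro i j
    have hgrad : ∀ k : Fin d, (fun y => gradient v y k) = fun y => fderiv ℝ v y (EuclideanSpace.single k 1) :=
      fun k => funext fun y => grad_comp v y k
    rw [hVdef]
    simp only [hgrad]
    exact second_sym hv (le_refl _) i j
  have hΦsym : ∀ i j, Φ i j = Φ j i := by
    intro i j
    have hgrad : ∀ k : Fin d, (fun y => gradient φ y k) = fun y => fderiv ℝ φ y (EuclideanSpace.single k 1) :=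
      fun k => funext fun y => grad_comp φ y k
    rw [hΦdef]
    simp only [hgrad]
    exact second_sym hφ (by exact le_trans (by norm_num) (WithTop.coe_le_coe.mpr (le_top (a := (2:ℕ∞))))) i j
  -- the inner divergence:  div(φ Z)
  have hEa : ∀ y, ediv (fun z => φ z • Z z) y
      = ∑ j, (φ y * J y j j + Z y j * gradient φ y j) := by
    intro y
    rw [ediv_eq (F := fun z => φ z • Z z) ((hφd y).smul (hZd y))]
    refine Finset.sum_congr rfl fun j _ => ?_
    have hcomp : (fun z => (φ z • Z z) j) = fun z => φ z * Z z j := by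
      funext z; simp [PiLp.smul_apply, smul_eq_mul]
    rw [hcomp, fderiv_fun_mul (hφd y) ((hZc j).differentiable one_ne_zero y)]
    simp only [ContinuousLinearMap.add_apply, ContinuousLinearMap.smul_apply, smul_eq_mul]
    rw [hJpd y j j, ← grad_comp]
  -- value of div(φZ) at x
  have hax : ediv (fun z => φ z • Z z) x = ∑ j, (φ x * Jm j j + C j * B j) := hEa x
  -- Laplacian
  have hlap : elap v x = ∑ i, V i i := by
    rw [elap, ediv_eq ((hGv.differentiable one_ne_zero) x)]
  -- the scalar function a' = div(φZ) as a nice sum, its derivative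
  have haf : ContDiff ℝ 1 (fun y => ∑ j, (φ y * J y j j + Z y j * gradient φ y j)) :=
    ContDiff.sum fun j _ =>
      (((hφ.of_le (by simp)).mul (hJc j j))).add ((hZc j).mul (hgφ j))
  have hDa : ∀ i, fderiv ℝ (fun y => ∑ j, (φ y * J y j j + Z y j * gradient φ y j)) x (EuclideanSpace.single i 1)
      = ∑ j, (B i * Jm j j + φ x * W i j + Jm j i * B j + C j * Φ i j) := by
    intro i
    rw [pd_sum_mul2 (f := fun _ => φ) (g := fun j y => J y j j) (h := fun j y => Z y j)
      (k := fun j y => gradient φ y j)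
      (fun j => hφd x) (fun j => (hJc j j).differentiable one_ne_zero x)
      (fun j => (hZc j).differentiable one_ne_zero x)
      (fun j => (hgφ j).differentiable one_ne_zero x) (EuclideanSpace.single i 1)]
    refine Finset.sum_congr rfl fun j _ => ?_
    rw [hJpd x j i, ← grad_comp φ x i]
    show φ x * W i j + Jm j j * B i + (C j * Φ i j + B j * Jm j i)
      = B i * Jm j j + φ x * W i j + Jm j i * B j + C j * Φ i j
    ring
  -- the scalar function b = ⟪∇v, ∇φ⟫
  have hbfun : (fun y => (inner ℝ (gradient v y) (gradient φ y) : ℝ))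
      = fun y => ∑ j, gradient v y j * gradient φ y j :=
    funext fun y => real_inner_sum _ _
  have hbf : ContDiff ℝ 1 (fun y => ∑ j, gradient v y j * gradient φ y j) :=
    ContDiff.sum fun j _ => (hgv j).mul (hgφ j)
  have hDb : ∀ i, fderiv ℝ (fun y => ∑ j, gradient v y j * gradient φ y j) x (EuclideanSpace.single i 1)
      = ∑ j, (V i j * B j + A j * Φ i j) := by
    intro i
    rw [pd_sum_mul (fun j => (hgv j).differentiable one_ne_zero x)
      (fun j => (hgφ j).differentiable one_ne_zero x) (EuclideanSpace.single i 1)]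
    refine Finset.sum_congr rfl fun j _ => ?_
    show A j * Φ i j + B j * V i j = V i j * B j + A j * Φ i j
    ring
  have hbx : (inner ℝ (gradient v x) (gradient φ x) : ℝ) = ∑ j, A j * B j := real_inner_sum _ _
  -- the big divergence
  have hbig : ediv (fun y => ediv (fun z => φ z • Z z) y • gradient v y
        - (inner ℝ (gradient v y) (gradient φ y) : ℝ) • Z y) x
      = ∑ i, ((∑ j, (B i * Jm j j + φ x * W i j + Jm j i * B j + C j * Φ i j)) * A i
          + (∑ j, (φ x * Jm j j + C j * B j)) * V i i
          - ((∑ j, (V i j * B j + A j * Φ i j)) * C i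
             + (∑ j, A j * B j) * Jm i i)) := by
    have hFeq : (fun y => ediv (fun z => φ z • Z z) y • gradient v y
          - (inner ℝ (gradient v y) (gradient φ y) : ℝ) • Z y)
        = fun y => (∑ j, (φ y * J y j j + Z y j * gradient φ y j)) • gradient v y
          - (∑ j, gradient v y j * gradient φ y j) • Z y := by
      funext y
      rw [hEa y, real_inner_sum]
    rw [hFeq]
    have hadiff : DifferentiableAt ℝ
        (fun y => ∑ j, (φ y * J y j j + Z y j * gradient φ y j)) x :=
      haf.differentiable one_ne_zero x
    have hbdiff : DifferentiableAt ℝ (fun y => ∑ j, gradient v y j * gradient φ y j) x :=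
      hbf.differentiable one_ne_zero x
    have hFdiff : DifferentiableAt ℝ
        (fun y => (∑ j, (φ y * J y j j + Z y j * gradient φ y j)) • gradient v y
          - (∑ j, gradient v y j * gradient φ y j) • Z y) x :=
      (hadiff.smul ((hGv.differentiable one_ne_zero) x)).sub (hbdiff.smul (hZd x))
    rw [ediv_eq hFdiff]
    refine Finset.sum_congr rfl fun i _ => ?_
    have hcomp : (fun y => ((∑ j, (φ y * J y j j + Z y j * gradient φ y j)) • gradient v y
          - (∑ j, gradient v y j * gradient φ y j) • Z y) i)
        = fun y => (∑ j, (φ y * J y j j + Z y j * gradient φ y j)) * gradient v y i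
          - (∑ j, gradient v y j * gradient φ y j) * Z y i := by
      funext y; simp [PiLp.sub_apply, PiLp.smul_apply, smul_eq_mul]
    rw [hcomp, fderiv_fun_sub (f := fun y => (∑ j, (φ y * J y j j + Z y j * gradient φ y j)) * gradient v y i)
        (g := fun y => (∑ j, gradient v y j * gradient φ y j) * Z y i) (hadiff.mul ((hgv i).differentiable one_ne_zero x))
        (hbdiff.mul ((hZc i).differentiable one_ne_zero x)),
      ContinuousLinearMap.sub_apply,
      fderiv_fun_mul hadiff ((hgv i).differentiable one_ne_zero x),
      fderiv_fun_mul hbdiff ((hZc i).differentiable one_ne_zero x)]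
    simp only [ContinuousLinearMap.add_apply, ContinuousLinearMap.smul_apply, smul_eq_mul]
    rw [hDa i, hDb i, hJpd x i i]
    show (∑ j, (φ x * Jm j j + C j * B j)) * V i i
        + A i * (∑ j, (B i * Jm j j + φ x * W i j + Jm j i * B j + C j * Φ i j))
        - ((∑ j, A j * B j) * Jm i i + C i * (∑ j, (V i j * B j + A j * Φ i j)))
      = (∑ j, (B i * Jm j j + φ x * W i j + Jm j i * B j + C j * Φ i j)) * A i
        + (∑ j, (φ x * Jm j j + C j * B j)) * V i i
        - ((∑ j, (V i j * B j + A j * Φ i j)) * C i + (∑ j, A j * B j) * Jm i i)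
    ring
  -- the term ⟪∇(Z·∇v), ∇φ⟫
  have hcterm : (inner ℝ (gradient (fun y => (inner ℝ (Z y) (gradient v y) : ℝ)) x)
        (gradient φ x) : ℝ)
      = ∑ i, (∑ j, (Jm j i * A j + C j * V i j)) * B i := by
    rw [real_inner_sum]
    refine Finset.sum_congr rfl fun i _ => ?_
    have hcfun : (fun y => (inner ℝ (Z y) (gradient v y) : ℝ))
        = fun y => ∑ j, Z y j * gradient v y j := funext fun y => real_inner_sum _ _
    rw [grad_comp, hcfun, pd_sum_mul (fun j => (hZc j).differentiable one_ne_zero x)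
      (fun j => (hgv j).differentiable one_ne_zero x) (EuclideanSpace.single i 1)]
    congr 1
    refine Finset.sum_congr rfl fun j _ => ?_
    rw [hJpd x j i]
    show C j * V i j + A j * Jm j i = Jm j i * A j + C j * V i j
    ring
  -- the matrix term
  have hmat : (inner ℝ ((Matrix.toEuclideanLin (J x + (J x)ᵀ)) (gradient v x))
        (gradient φ x) : ℝ)
      = ∑ i, (∑ j, (Jm i j + Jm j i) * A j) * B i := by
    rw [real_inner_sum]
    refine Finset.sum_congr rfl fun i _ => ?_
    congr 1
  -- the trace term
  have htr : (inner ℝ (gradient (fun y => (J y).trace) x) (gradient v x) : ℝ)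
      = ∑ i, (∑ j, W i j) * A i := by
    rw [real_inner_sum]
    refine Finset.sum_congr rfl fun i _ => ?_
    congr 1
    have htf : (fun y => (J y).trace) = fun y => ∑ j, J y j j := by
      funext y; rfl
    rw [grad_comp, htf, fderiv_fun_sum (A := fun j y => J y j j) (fun j _ => (hJc j j).differentiable one_ne_zero x),
      ContinuousLinearMap.sum_apply]
  rw [hmat, htr, hbig, hcterm, hax, hlap]
  exact key_alg A B C Jm V Φ W (φ x) hVsym hΦsym
end

section
/- Let h > 0, n ≥ 1, t_j = jh, and μ_n = √(t_n/π) − (h/√(4π)) Σ'_{j=0}^{n-1} (t_n − t_j)^{-1/2} (the prime halving the j=0 term). Then μ_n = (√(t_n)/√π)(1 − (1/(2√n)) Σ'_{j=0}^{n-1} (n − j)^{-1/2}) and |μ_n| ≤ C √h for a constant C independent of n and h. -/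
/-!
Factoring out `√h / √π`, the weight becomes `(√h / √π) (√n - 1/(4√n) - S/2)` with
`S = ∑_{k=1}^{n-1} k^{-1/2}`. Since `2(√(k+1) - √k) = 2/(√(k+1) + √k)` lies between
`(k+1)^{-1/2}` and `k^{-1/2}`, telescoping (the discrete form of `∫ u^{-1/2} du = 2√u`)
gives `2√n - 2 ≤ S ≤ 2√n`. Hence the bracket lies in `[-1/4, 1]` and `|μ_n| ≤ √h / √π ≤ √h`.
-/

open Finset Real

theorem rpow_neg_half {x : ℝ} (hx : 0 ≤ x) : x ^ (-(1 / 2) : ℝ) = (√x)⁻¹ := by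
  rw [rpow_neg hx, ← sqrt_eq_rpow]

theorem sum_Ico_one_sub_eq_sum_range {M : Type*} [AddCommMonoid M] (f : ℝ → M) (m : ℕ) :
    ∑ j ∈ Ico 1 (m + 1), f ((m + 1 : ℕ) - j) = ∑ k ∈ range m, f (k + 1) := by
  rw [sum_Ico_eq_sum_range, Nat.add_sub_cancel, ← sum_range_reflect]
  refine sum_congr rfl fun k hk => ?_
  have := mem_range.mp hk
  congr 1
  rw [show 1 + (m - 1 - k) = m - k by omega, Nat.cast_sub this.le]
  push_cast
  ring

theorem inv_sqrt_add_one_le_two_mul_sqrt_sub {y : ℝ} (hy : 0 ≤ y) :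
    (√(y + 1))⁻¹ ≤ 2 * (√(y + 1) - √y) := by
  have hpos : 0 < √(y + 1) := sqrt_pos.mpr (by linarith)
  have hmono : √y ≤ √(y + 1) := sqrt_le_sqrt (by linarith)
  have hsq : √(y + 1) ^ 2 - √y ^ 2 = 1 := by rw [sq_sqrt (by linarith), sq_sqrt hy]; ring
  rw [← one_div, div_le_iff₀ hpos]
  nlinarith

theorem two_mul_sqrt_sub_le_inv_sqrt {y : ℝ} (hy : 0 < y) :
    2 * (√(y + 1) - √y) ≤ (√y)⁻¹ := by
  have hpos : 0 < √y := sqrt_pos.mpr hy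
  have hmono : √y ≤ √(y + 1) := sqrt_le_sqrt (by linarith)
  have hsq : √(y + 1) ^ 2 - √y ^ 2 = 1 := by rw [sq_sqrt (by linarith), sq_sqrt hy.le]; ring
  rw [← one_div, le_div_iff₀ hpos]
  nlinarith

theorem sum_range_inv_sqrt_succ_le (m : ℕ) :
    ∑ k ∈ range m, (√((k : ℝ) + 1))⁻¹ ≤ 2 * √m := by
  calc ∑ k ∈ range m, (√((k : ℝ) + 1))⁻¹
      ≤ ∑ k ∈ range m, (2 * √((k + 1 : ℕ) : ℝ) - 2 * √(k : ℝ)) :=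
        sum_le_sum fun k _ => by
          push_cast; linarith [inv_sqrt_add_one_le_two_mul_sqrt_sub (Nat.cast_nonneg (α := ℝ) k)]
    _ = 2 * √m := by rw [sum_range_sub (fun k => 2 * √(k : ℝ))]; simp

theorem two_mul_sqrt_sub_two_le_sum_range_inv_sqrt_succ (m : ℕ) :
    2 * √((m : ℝ) + 1) - 2 ≤ ∑ k ∈ range m, (√((k : ℝ) + 1))⁻¹ := by
  calc 2 * √((m : ℝ) + 1) - 2
      = ∑ k ∈ range m, (2 * √(((k + 1 : ℕ) : ℝ) + 1) - 2 * √((k : ℝ) + 1)) := by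
        rw [sum_range_sub (fun k => 2 * √((k : ℝ) + 1))]; simp
    _ ≤ ∑ k ∈ range m, (√((k : ℝ) + 1))⁻¹ :=
        sum_le_sum fun k _ => by
          push_cast; linarith [two_mul_sqrt_sub_le_inv_sqrt (by positivity : (0 : ℝ) < k + 1)]

theorem sum_Ico_one_sub_rpow_neg_half_bounds {n : ℕ} (hn : 1 ≤ n) :
    2 * √(n : ℝ) - 2 ≤ ∑ j ∈ Ico 1 n, ((n : ℝ) - j) ^ (-(1 / 2) : ℝ) ∧
      ∑ j ∈ Ico 1 n, ((n : ℝ) - j) ^ (-(1 / 2) : ℝ) ≤ 2 * √(n : ℝ) := by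
  obtain ⟨m, rfl⟩ : ∃ m, n = m + 1 := ⟨n - 1, by omega⟩
  have hsum : ∑ j ∈ Ico 1 (m + 1), (((m + 1 : ℕ) : ℝ) - j) ^ (-(1 / 2) : ℝ)
      = ∑ k ∈ range m, (√((k : ℝ) + 1))⁻¹ := by
    rw [sum_Ico_one_sub_eq_sum_range (· ^ (-(1 / 2) : ℝ))]
    exact sum_congr rfl fun k _ => rpow_neg_half (by positivity)
  have hm : √(m : ℝ) ≤ √((m : ℝ) + 1) := sqrt_le_sqrt (by linarith)
  rw [hsum]
  push_cast
  exact ⟨two_mul_sqrt_sub_two_le_sum_range_inv_sqrt_succ m,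
    (sum_range_inv_sqrt_succ_le m).trans (by linarith)⟩

theorem sum_Ico_mul_sub_mul_rpow (n : ℕ) {h : ℝ} (hh : 0 ≤ h) (r : ℝ) :
    ∑ j ∈ Ico 1 n, ((n : ℝ) * h - j * h) ^ r
      = (∑ j ∈ Ico 1 n, ((n : ℝ) - j) ^ r) * h ^ r := by
  rw [sum_mul]
  refine sum_congr rfl fun j hj => ?_
  have hjn : (j : ℝ) ≤ n := by exact_mod_cast (mem_Ico.mp hj).2.le
  rw [← sub_mul, mul_rpow (by linarith) hh]

theorem correction_weight_eq {h : ℝ} (hh : 0 < h) {n : ℕ} (hn : 1 ≤ n) :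
    √((n : ℝ) * h / π) - (h / √(4 * π)) *
        ((1 / 2) * ((n : ℝ) * h) ^ (-(1 / 2) : ℝ)
          + ∑ j ∈ Ico 1 n, ((n : ℝ) * h - j * h) ^ (-(1 / 2) : ℝ))
      = (√((n : ℝ) * h) / √π) *
        (1 - (1 / (2 * √(n : ℝ))) *
          ((1 / 2) * (n : ℝ) ^ (-(1 / 2) : ℝ)
            + ∑ j ∈ Ico 1 n, ((n : ℝ) - j) ^ (-(1 / 2) : ℝ))) := by
  have ha : √(n : ℝ) ≠ 0 := (sqrt_pos.mpr (by exact_mod_cast hn)).ne'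
  have hb : √h ≠ 0 := (sqrt_pos.mpr hh).ne'
  have hp : √π ≠ 0 := (sqrt_pos.mpr pi_pos).ne'
  have hsq : h = √h * √h := (mul_self_sqrt hh.le).symm
  have h4 : √(4 * π) = 2 * √π := by
    rw [sqrt_mul (by norm_num), show (4 : ℝ) = 2 ^ 2 by norm_num, sqrt_sq (by norm_num)]
  rw [sum_Ico_mul_sub_mul_rpow n hh.le, sqrt_div (by positivity), h4,
    rpow_neg_half (by positivity), rpow_neg_half hh.le, rpow_neg_half (by positivity),
    sqrt_mul (by positivity)]
  nth_rewrite 2 [hsq]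
  field_simp

theorem abs_sqrt_mul_div_sqrt_pi_mul_le {h : ℝ} {n : ℕ} (hn : 1 ≤ n) :
    |(√((n : ℝ) * h) / √π) *
        (1 - (1 / (2 * √(n : ℝ))) *
          ((1 / 2) * (n : ℝ) ^ (-(1 / 2) : ℝ)
            + ∑ j ∈ Ico 1 n, ((n : ℝ) - j) ^ (-(1 / 2) : ℝ)))| ≤ √h := by
  obtain ⟨hSlo, hShi⟩ := sum_Ico_one_sub_rpow_neg_half_bounds hn
  set S := ∑ j ∈ Ico 1 n, ((n : ℝ) - j) ^ (-(1 / 2) : ℝ)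
  set a := √(n : ℝ)
  have ha : 1 ≤ a := one_le_sqrt.mpr (by exact_mod_cast hn)
  have hp : 1 ≤ √π := one_le_sqrt.mpr (by linarith [pi_gt_three])
  have hfactor : (√((n : ℝ) * h) / √π) *
        (1 - (1 / (2 * a)) * ((1 / 2) * (n : ℝ) ^ (-(1 / 2) : ℝ) + S))
      = (√h / √π) * (a - 1 / (4 * a) - S / 2) := by
    rw [rpow_neg_half (by positivity), sqrt_mul (by positivity)]
    field_simp
    ring
  have hbracket : |a - 1 / (4 * a) - S / 2| ≤ 1 := by
    have : 1 / (4 * a) ≤ 1 / 4 := by gcongr; linarith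
    rw [abs_le]
    constructor <;> linarith [show 0 < 1 / (4 * a) by positivity]
  rw [hfactor]
  calc |(√h / √π) * (a - 1 / (4 * a) - S / 2)|
      = (√h / √π) * |a - 1 / (4 * a) - S / 2| := by rw [abs_mul, abs_of_nonneg (by positivity)]
    _ ≤ √h / √π := mul_le_of_le_one_right (by positivity) hbracket
    _ ≤ √h := div_le_self (sqrt_nonneg h) hp

/-- The endpoint singularity-correction weight
`μ_n = √(t_n/π) − (h/√(4π)) Σ'_{j=0}^{n-1}(t_n − t_j)^{-1/2}` (primed sum halving
the `j = 0` term, `t_j = jh`) satisfies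
`μ_n = (√t_n/√π)(1 − (1/(2√n)) Σ'_{j=0}^{n-1}(n−j)^{-1/2})` and
`|μ_n| ≤ C√h` with `C` independent of `n` and `h`. -/
theorem correction_weight_bound :
    ∃ C : ℝ, ∀ h : ℝ, 0 < h → ∀ n : ℕ, 1 ≤ n →
      (Real.sqrt ((n : ℝ) * h / Real.pi)
          - (h / Real.sqrt (4 * Real.pi)) *
            ((1/2) * ((n : ℝ) * h) ^ (-(1/2) : ℝ)
              + ∑ j ∈ Finset.Ico 1 n, ((n : ℝ) * h - (j : ℝ) * h) ^ (-(1/2) : ℝ))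
        = (Real.sqrt ((n : ℝ) * h) / Real.sqrt Real.pi) *
            (1 - (1 / (2 * Real.sqrt (n : ℝ))) *
              ((1/2) * (n : ℝ) ^ (-(1/2) : ℝ)
                + ∑ j ∈ Finset.Ico 1 n, ((n : ℝ) - (j : ℝ)) ^ (-(1/2) : ℝ)))) ∧
      |Real.sqrt ((n : ℝ) * h / Real.pi)
          - (h / Real.sqrt (4 * Real.pi)) *
            ((1/2) * ((n : ℝ) * h) ^ (-(1/2) : ℝ)
              + ∑ j ∈ Finset.Ico 1 n, ((n : ℝ) * h - (j : ℝ) * h) ^ (-(1/2) : ℝ))|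
        ≤ C * Real.sqrt h := by
  refine ⟨1, fun h hh n hn => ⟨correction_weight_eq hh hn, ?_⟩⟩
  rw [correction_weight_eq hh hn, one_mul]
  exact abs_sqrt_mul_div_sqrt_pi_mul_le hn
end
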